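/- A string S of length m whose smallest period is strictly greater than m/4 occurs at most 3 times in any window of length 3m/2 of a text, hence O(1) times per text block of size 3m/2. -/

import Mathlib

/-- A string `S` of length `m` (as a function on ℕ) has period `p`. -/
def HasPeriod {α : Type*} (S : ℕ → α) (m p : ℕ) : Prop :=
  ∀ i, i + p < m → S i = S (i + p)

/-! Two occurrences of `S` at distance `d` make `d` a period of `S`, so occurrences are more than
`m/4` apart. Cutting the `m/2` possible starting positions of the window into buckets of length
`m/4` therefore puts at most one occurrence into each of the three buckets. -/

def OccursAt {α : Type*} (S T : ℕ → α) (m i : ℕ) : Prop :=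
  ∀ t < m, T (i + t) = S t

theorem OccursAt.hasPeriod_sub {α : Type*} {S T : ℕ → α} {m i j : ℕ}
    (hi : OccursAt S T m i) (hj : OccursAt S T m j) (hij : i ≤ j) :
    HasPeriod S m (j - i) := fun t ht => by
  rw [← hj t (by omega), ← hi (t + (j - i)) ht]
  congr 1
  omega

theorem Finset.card_le_of_separated {s : Finset ℕ} {c k n m : ℕ} (hm : 0 < m)
    (hsep : ∀ i ∈ s, ∀ j ∈ s, i < j → m < k * (j - i))
    (hwin : ∀ i ∈ s, c ≤ i ∧ k * (i - c) ≤ n * m) :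
    s.card ≤ n + 1 := by
  have hmono : StrictMonoOn (fun i => k * (i - c) / m) s := by
    intro i hi j hj hij
    have hshift : k * (i - c) + m ≤ k * (j - c) := by
      have hsplit : j - c = (i - c) + (j - i) := by have := (hwin i hi).1; omega
      rw [hsplit, Nat.mul_add]
      have := hsep i hi j hj hij
      omega
    calc k * (i - c) / m < (k * (i - c) + m) / m := by rw [Nat.add_div_right _ hm]; omega
      _ ≤ k * (j - c) / m := Nat.div_le_div_right hshift
  simpa using Finset.card_le_card_of_injOn (t := Finset.range (n + 1)) _
    (fun i hi => Finset.mem_range.2 <| Nat.lt_succ_of_le <|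
      Nat.div_le_of_le_mul (by linarith [(hwin i hi).2]))
    hmono.injOn

/-- A string `S` of length `m` whose smallest period is strictly greater than
`m/4` occurs at most 3 times in any window of length `3m/2` of a text: the
occurrences that fit in the window starting at column `c` (i.e. starting
positions `i` with `c ≤ i` and `i + m ≤ c + 3m/2`) number at most 3. -/
theorem few_occurrences_in_window {α : Type*} [DecidableEq α]
    (S T : ℕ → α) (m : ℕ) (hm : 0 < m)
    (hper : ∀ p, 0 < p → 4 * p ≤ m → ¬ HasPeriod S m p)
    (c : ℕ) :
    ((Finset.range (c + m)).filter
        (fun i => c ≤ i ∧ 2 * (i + m) ≤ 2 * c + 3 * m ∧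
          ∀ t < m, T (i + t) = S t)).card ≤ 3 := by
  refine Finset.card_le_of_separated (k := 4) (n := 2) (c := c) hm ?_ ?_
  · intro i hi j hj hij
    obtain ⟨-, -, -, hocc_i⟩ := Finset.mem_filter.1 hi
    obtain ⟨-, -, -, hocc_j⟩ := Finset.mem_filter.1 hj
    by_contra! hclose
    exact hper (j - i) (by omega) hclose
      (OccursAt.hasPeriod_sub hocc_i hocc_j hij.le)
  · intro i hi
    obtain ⟨-, hci, hwin, -⟩ := Finset.mem_filter.1 hi
    omega
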